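/- arXiv:1910.04152 — 2 statements merged into one kernel-verified Lean document; each statement's English description precedes it below -/
import Mathlib

section
/- Let (E,E') be a dual pair of real vector spaces and μ : E → [0,1] a fuzzy set. Then the fuzzy polar μ° satisfies μ° = sup over θ ∈ (0,1] of (θ ∧ χ_{[μ]_{1-θ}°}), where χ_A denotes the characteristic function of A and ∧ is pointwise minimum. -/
open Set

noncomputable section

variable {E E' : Type*}

/-- The classical polar of `A ⊆ E` w.r.t. the bilinear pairing `B`:
`A° = {x' : sup_{x ∈ A} |⟨x,x'⟩| ≤ 1}`. -/
def polarSet [AddCommGroup E] [Module ℝ E] [AddCommGroup E'] [Module ℝ E']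
    (B : E →ₗ[ℝ] E' →ₗ[ℝ] ℝ) (A : Set E) : Set E' :=
  {x' | ∀ x ∈ A, |B x x'| ≤ 1}

/-- The `θ`-level set `[μ]_θ = {x : μ x ≥ θ}` of a fuzzy set `μ`. -/
def levelSet (μ : E → ℝ) (θ : ℝ) : Set E := {x | θ ≤ μ x}

/-- `(E, E')` is a dual pair: the pairing separates points on both sides. -/
def IsDualPair [AddCommGroup E] [Module ℝ E] [AddCommGroup E'] [Module ℝ E']
    (B : E →ₗ[ℝ] E' →ₗ[ℝ] ℝ) : Prop :=
  (∀ x : E, x ≠ 0 → ∃ x' : E', B x x' ≠ 0) ∧ (∀ x' : E', x' ≠ 0 → ∃ x : E, B x x' ≠ 0)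

/-- The fuzzy polar `μ°(x') = sup {θ ∈ (0,1] : x' ∈ ([μ]_{1-θ})°}` (and `= 0` if this set is
empty, which agrees with `Real.sSup_empty`). -/
def fuzzyPolar [AddCommGroup E] [Module ℝ E] [AddCommGroup E'] [Module ℝ E']
    (B : E →ₗ[ℝ] E' →ₗ[ℝ] ℝ) (μ : E → ℝ) : E' → ℝ :=
  fun x' => sSup {θ : ℝ | θ ∈ Ioc (0:ℝ) 1 ∧ x' ∈ polarSet B (levelSet μ (1 - θ))}

/-- `μ° = sup_{θ ∈ (0,1]} (θ ⊓ χ_{([μ]_{1-θ})°})`. -/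
theorem fuzzyPolar_eq_iSup [AddCommGroup E] [Module ℝ E] [AddCommGroup E'] [Module ℝ E']
    (B : E →ₗ[ℝ] E' →ₗ[ℝ] ℝ) (hB : IsDualPair B)
    (μ : E → ℝ) (hμ : ∀ x, μ x ∈ Icc (0:ℝ) 1) (x' : E') :
    fuzzyPolar B μ x' =
      ⨆ θ : Ioc (0:ℝ) 1,
        min θ.1 ((polarSet B (levelSet μ (1 - θ.1))).indicator (1 : E' → ℝ) x') := by

  set S := {θ : ℝ | θ ∈ Ioc (0:ℝ) 1 ∧ x' ∈ polarSet B (levelSet μ (1 - θ))} with hS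
  have hf : ∀ θ : Ioc (0:ℝ) 1,
      min θ.1 ((polarSet B (levelSet μ (1 - θ.1))).indicator (1 : E' → ℝ) x') ≤ 1 := by
    intro θ
    exact le_trans (min_le_left _ _) θ.2.2
  have hbdd : BddAbove (Set.range fun θ : Ioc (0:ℝ) 1 =>
      min θ.1 ((polarSet B (levelSet μ (1 - θ.1))).indicator (1 : E' → ℝ) x') ) := by
    refine ⟨1, ?_⟩
    rintro y ⟨θ, rfl⟩
    exact hf θ
  have hSbdd : BddAbove S := ⟨1, fun θ hθ => hθ.1.2⟩
  have hne : Nonempty (Ioc (0:ℝ) 1) := ⟨⟨1, by norm_num⟩⟩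
  have hiSup_nonneg : (0:ℝ) ≤ ⨆ θ : Ioc (0:ℝ) 1,
      min θ.1 ((polarSet B (levelSet μ (1 - θ.1))).indicator (1 : E' → ℝ) x') := by
    refine le_trans ?_ (le_ciSup hbdd ⟨1, by norm_num⟩)
    refine le_min (by norm_num) ?_
    exact Set.indicator_nonneg (fun _ _ => zero_le_one) _
  refine le_antisymm ?_ ?_
  · refine Real.sSup_le ?_ hiSup_nonneg
    intro θ hθ
    have : min θ ((polarSet B (levelSet μ (1 - θ))).indicator (1 : E' → ℝ) x') = θ := by
      rw [Set.indicator_of_mem hθ.2]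
      exact min_eq_left hθ.1.2
    calc θ = _ := this.symm
      _ ≤ _ := le_ciSup hbdd ⟨θ, hθ.1⟩
  · refine ciSup_le ?_
    intro θ
    by_cases h : x' ∈ polarSet B (levelSet μ (1 - θ.1))
    · rw [Set.indicator_of_mem h]
      have : min θ.1 ((1 : E' → ℝ) x') = θ.1 := min_eq_left θ.2.2
      rw [this]
      exact le_csSup hSbdd ⟨θ.2, h⟩
    · rw [Set.indicator_of_notMem h]
      simp only [Pi.zero_apply, min_le_iff]
      right
      exact Real.sSup_nonneg fun θ hθ => le_of_lt hθ.1.1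
end
end

section
/- Let (E,E') be a dual pair and (μ_j)_{j∈T} a family of fuzzy sets on E. Then (sup_{j∈T} μ_j)° = inf_{j∈T} (μ_j)°, pointwise on E'. -/
open Set

noncomputable section

variable {E E' : Type*}

section auxlemmas

variable [AddCommGroup E] [Module ℝ E] [AddCommGroup E'] [Module ℝ E']
  (B : E →ₗ[ℝ] E' →ₗ[ℝ] ℝ)

lemma polarSet_anti {A A' : Set E} (h : A ⊆ A') : polarSet B A' ⊆ polarSet B A :=
  fun _ hx' x hx => hx' x (h hx)

lemma fp_bddAbove (ν : E → ℝ) (x' : E') :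
    BddAbove {θ : ℝ | θ ∈ Ioc (0:ℝ) 1 ∧ x' ∈ polarSet B (levelSet ν (1 - θ))} :=
  ⟨1, fun _ hθ => hθ.1.2⟩

lemma fp_nonneg (ν : E → ℝ) (x' : E') : 0 ≤ fuzzyPolar B ν x' :=
  Real.sSup_nonneg (fun _ hθ => le_of_lt hθ.1.1)

lemma fp_mem_of_lt (ν : E → ℝ) (x' : E') {θ : ℝ} (h0 : 0 < θ)
    (h : θ < fuzzyPolar B ν x') :
    θ ∈ Ioc (0:ℝ) 1 ∧ x' ∈ polarSet B (levelSet ν (1 - θ)) := by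
  set S := {θ : ℝ | θ ∈ Ioc (0:ℝ) 1 ∧ x' ∈ polarSet B (levelSet ν (1 - θ))} with hS
  rcases S.eq_empty_or_nonempty with he | hne
  · exfalso
    rw [fuzzyPolar, ← hS, he, Real.sSup_empty] at h
    exact absurd (h0.trans h) (lt_irrefl 0)
  · obtain ⟨s, hs, hlt⟩ := exists_lt_of_lt_csSup hne h
    refine ⟨⟨h0, hlt.le.trans hs.1.2⟩, ?_⟩
    refine polarSet_anti B (fun x hx => ?_) hs.2
    simp only [levelSet, mem_setOf_eq] at hx ⊢
    linarith

end auxlemmas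

/-- `(sup_j μ_j)° = inf_j (μ_j)°` pointwise. -/
theorem fuzzyPolar_iSup [AddCommGroup E] [Module ℝ E] [AddCommGroup E'] [Module ℝ E']
    (B : E →ₗ[ℝ] E' →ₗ[ℝ] ℝ) (hB : IsDualPair B)
    {T : Type*} [Nonempty T] (μ : T → E → ℝ) (hμ : ∀ j x, μ j x ∈ Icc (0:ℝ) 1) (x' : E') :
    fuzzyPolar B (fun x => ⨆ j, μ j x) x' = ⨅ j, fuzzyPolar B (μ j) x' := by
  have hbdd : ∀ x : E, BddAbove (Set.range fun j => μ j x) := fun x =>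
    ⟨1, fun _ ⟨j, hj⟩ => hj ▸ (hμ j x).2⟩
  have hinf_bdd : BddBelow (Set.range fun j => fuzzyPolar B (μ j) x') :=
    ⟨0, fun _ ⟨j, hj⟩ => hj ▸ fp_nonneg B (μ j) x'⟩
  apply le_antisymm
  · refine le_ciInf fun j => ?_
    refine Real.sSup_le (fun θ hθ => ?_) (fp_nonneg B (μ j) x')
    refine le_csSup (fp_bddAbove B (μ j) x') ⟨hθ.1, ?_⟩
    refine polarSet_anti B (fun x hx => ?_) hθ.2
    exact le_trans hx (le_ciSup (hbdd x) j)
  · refine le_of_forall_lt fun a ha => ?_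
    rcases lt_or_ge a 0 with ha0 | ha0
    · exact ha0.trans_le (fp_nonneg B _ x')
    · obtain ⟨θ'', hθ''⟩ := exists_between ha
      obtain ⟨θ', hθ'⟩ := exists_between hθ''.2
      have h0'' : 0 < θ'' := lt_of_le_of_lt ha0 hθ''.1
      have hmem : ∀ j, θ' ∈ Ioc (0:ℝ) 1 ∧ x' ∈ polarSet B (levelSet (μ j) (1 - θ')) := by
        intro j
        refine fp_mem_of_lt B (μ j) x' (h0''.trans hθ'.1) (lt_of_lt_of_le hθ'.2 ?_)
        exact ciInf_le hinf_bdd j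
      have hmem' : θ'' ∈ {θ : ℝ | θ ∈ Ioc (0:ℝ) 1 ∧
          x' ∈ polarSet B (levelSet (fun x => ⨆ j, μ j x) (1 - θ))} := by
        refine ⟨⟨h0'', le_trans hθ'.1.le (hmem (Classical.arbitrary T)).1.2⟩, ?_⟩
        intro x hx
        have hsup : 1 - θ' < ⨆ j, μ j x := lt_of_lt_of_le (by linarith [hθ'.1]) hx
        obtain ⟨j, hj⟩ := (lt_ciSup_iff (hbdd x)).mp hsup
        exact (hmem j).2 x hj.le
      calc a < θ'' := hθ''.1
        _ ≤ _ := le_csSup (fp_bddAbove B _ x') hmem'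
end
end
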